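/- arXiv:1910.14476 — 2 statements merged into one kernel-verified Lean document; each statement's English description precedes it below -/
import Mathlib

section
/- Let d ≥ 2. There exists a constant C_d > 0 depending only on d such that for every β > 0, every q₂ ∈ (−d, 1], and every v ∈ ℝ^d, one has ∫_{ℝ^d} |v₁ − v|^{q₂} e^{−β|v₁|²} dv₁ ≤ C_d [ (1 + β^{−d/2} + β^{−(d+1)/2}) if q₂ > 0, and (β^{−d/2} + 1/(d+q₂)) if q₂ ≤ 0 ] · (1 + |v|^{q₂⁺}), where q₂⁺ = max{0, q₂}. -/
/-!
Split according to the sign of `q₂`. For `0 < q₂ ≤ 1`, subadditivity of `t ↦ t ^ q₂` gives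
`|v₁ - v| ^ q₂ ≤ 1 + |v₁| + |v| ^ q₂`, which reduces the integral to the Gaussian moments
`∫ |x| ^ s e^{-β|x|²} dx = c_s β^{-(d+s)/2}` for `s = 0, 1`. For `q₂ ≤ 0` the integrand is at most
`|v₁ - v| ^ q₂` on the unit ball around `v`, whose integral is `d vol(B₁) / (d + q₂)`, and at
most the Gaussian elsewhere. Both exact integrals come from polar coordinates.
-/

open MeasureTheory Metric Set Module Real

lemma pow_sub_one_mul_rpow {n : ℕ} (hn : n ≠ 0) {y : ℝ} (hy : 0 < y) (s : ℝ) :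
    y ^ (n - 1) * y ^ s = y ^ ((n : ℝ) - 1 + s) := by
  rw [rpow_add hy, ← rpow_natCast, Nat.cast_sub (Nat.one_le_iff_ne_zero.2 hn), Nat.cast_one]

lemma pow_sub_one_smul_indicator_rpow {n : ℕ} (hn : n ≠ 0) {y : ℝ} (hy : 0 < y) (q : ℝ) :
    y ^ (n - 1) • (Iio 1).indicator (fun r ↦ r ^ q) y =
      (Iio 1).indicator (fun r ↦ r ^ ((n : ℝ) - 1 + q)) y := by
  by_cases h : y < 1 <;> simp [h, pow_sub_one_mul_rpow hn hy]

lemma rpow_le_one_add {t q : ℝ} (ht : 0 ≤ t) (hq0 : 0 ≤ q) (hq1 : q ≤ 1) : t ^ q ≤ 1 + t := by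
  rcases le_or_gt t 1 with h | h
  · linarith [rpow_le_one ht h hq0]
  · linarith [rpow_le_self_of_one_le h.le hq1]

lemma rpow_mul_le_indicator_add {t q e : ℝ} (ht : 0 ≤ t) (hq : q ≤ 0) (he0 : 0 ≤ e)
    (he1 : e ≤ 1) : t ^ q * e ≤ (Iio 1).indicator (fun r ↦ r ^ q) t + e := by
  by_cases h : t ∈ Iio 1
  · rw [indicator_of_mem h]
    nlinarith [rpow_nonneg ht q]
  · rw [indicator_of_notMem h, zero_add]
    exact mul_le_of_le_one_left he0 (rpow_le_one_of_one_le_of_nonpos (not_lt.1 h) hq)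

lemma norm_sub_rpow_le {E : Type*} [SeminormedAddCommGroup E] (x v : E) {q : ℝ} (hq0 : 0 ≤ q)
    (hq1 : q ≤ 1) : ‖x - v‖ ^ q ≤ 1 + ‖x‖ + ‖v‖ ^ q :=
  calc ‖x - v‖ ^ q ≤ (‖x‖ + ‖v‖) ^ q := rpow_le_rpow (norm_nonneg _) (norm_sub_le x v) hq0
    _ ≤ ‖x‖ ^ q + ‖v‖ ^ q := rpow_add_le_add_rpow (norm_nonneg _) (norm_nonneg _) hq0 hq1
    _ ≤ 1 + ‖x‖ + ‖v‖ ^ q := by linarith [rpow_le_one_add (norm_nonneg x) hq0 hq1]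

section HaarMeasure

variable {E : Type*} [NormedAddCommGroup E] [NormedSpace ℝ E] [MeasurableSpace E] (μ : Measure E)

noncomputable def gaussianMomentCoeff (s : ℝ) : ℝ :=
  finrank ℝ E * μ.real (ball 0 1) * (Gamma ((finrank ℝ E + s) / 2) / 2)

lemma gaussianMomentCoeff_nonneg {s : ℝ} (hs : -(finrank ℝ E : ℝ) ≤ s) :
    0 ≤ gaussianMomentCoeff μ s :=
  mul_nonneg (by positivity) (div_nonneg (Gamma_nonneg_of_nonneg (by linarith)) zero_le_two)

variable [FiniteDimensional ℝ E] [BorelSpace E] [Nontrivial E] [μ.IsAddHaarMeasure]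

lemma integrable_norm_rpow_mul_exp_neg_mul_sq {b s : ℝ} (hb : 0 < b)
    (hs : -(finrank ℝ E : ℝ) < s) :
    Integrable (fun x : E ↦ ‖x‖ ^ s * exp (-b * ‖x‖ ^ 2)) μ := by
  rw [integrable_fun_norm_addHaar μ (f := fun r ↦ r ^ s * exp (-b * r ^ 2))]
  refine ((integrableOn_rpow_mul_exp_neg_mul_sq hb (s := (finrank ℝ E : ℝ) - 1 + s)
    (by linarith))).congr_fun (fun y (hy : 0 < y) ↦ ?_) measurableSet_Ioi
  rw [smul_eq_mul, ← mul_assoc, pow_sub_one_mul_rpow finrank_pos.ne' hy]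

lemma integral_norm_rpow_mul_exp_neg_mul_sq {b s : ℝ} (hb : 0 < b)
    (hs : -(finrank ℝ E : ℝ) < s) :
    ∫ x, ‖x‖ ^ s * exp (-b * ‖x‖ ^ 2) ∂μ =
      gaussianMomentCoeff μ s * b ^ (-((finrank ℝ E : ℝ) + s) / 2) := by
  rw [integral_fun_norm_addHaar μ (fun r ↦ r ^ s * exp (-b * r ^ 2)),
    setIntegral_congr_fun measurableSet_Ioi (g := fun y ↦ y ^ ((finrank ℝ E : ℝ) - 1 + s) *
      exp (-b * y ^ (2 : ℝ))) fun y (hy : 0 < y) ↦ by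
        dsimp only
        rw [smul_eq_mul, ← mul_assoc, pow_sub_one_mul_rpow finrank_pos.ne' hy, rpow_two],
    integral_rpow_mul_exp_neg_mul_rpow two_pos (by linarith) hb, nsmul_eq_mul, smul_eq_mul,
    gaussianMomentCoeff]
  ring_nf

lemma integrable_indicator_norm_rpow {q : ℝ} (hq : -(finrank ℝ E : ℝ) < q) :
    Integrable (fun x : E ↦ (Iio 1).indicator (fun r ↦ r ^ q) ‖x‖) μ := by
  rw [integrable_fun_norm_addHaar μ (f := (Iio 1).indicator fun r ↦ r ^ q)]
  refine IntegrableOn.congr_fun ?_ (fun y (hy : 0 < y) ↦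
    (pow_sub_one_smul_indicator_rpow finrank_pos.ne' hy q).symm) measurableSet_Ioi
  rw [integrableOn_indicator_iff measurableSet_Iio]
  exact ((intervalIntegrable_iff_integrableOn_Ioc_of_le zero_le_one).1
    (intervalIntegral.intervalIntegrable_rpow' (by linarith))).mono_set
    fun y ⟨hy1, hy0⟩ ↦ ⟨hy0, le_of_lt hy1⟩

lemma integral_indicator_norm_rpow {q : ℝ} (hq : -(finrank ℝ E : ℝ) < q) :
    ∫ x, (Iio 1).indicator (fun r ↦ r ^ q) ‖x‖ ∂μ =
      finrank ℝ E * μ.real (ball 0 1) / (finrank ℝ E + q) := by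
  have hexp : (finrank ℝ E : ℝ) - 1 + q + 1 = finrank ℝ E + q := by ring
  rw [integral_fun_norm_addHaar μ ((Iio 1).indicator fun r ↦ r ^ q),
    setIntegral_congr_fun measurableSet_Ioi fun y (hy : 0 < y) ↦
      pow_sub_one_smul_indicator_rpow finrank_pos.ne' hy q,
    setIntegral_indicator measurableSet_Iio, Ioi_inter_Iio, ← integral_Ioc_eq_integral_Ioo,
    ← intervalIntegral.integral_of_le zero_le_one, integral_rpow (Or.inl (by linarith)), hexp,
    zero_rpow (by linarith), one_rpow, nsmul_eq_mul, smul_eq_mul]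
  ring

lemma integral_norm_sub_rpow_mul_exp_neg_mul_sq_le_of_pos {b q : ℝ} (hb : 0 < b) (hq0 : 0 < q)
    (hq1 : q ≤ 1) (v : E) :
    ∫ x, ‖x - v‖ ^ q * exp (-b * ‖x‖ ^ 2) ∂μ ≤
      (1 + ‖v‖ ^ q) * (gaussianMomentCoeff μ 0 * b ^ (-(finrank ℝ E : ℝ) / 2)) +
        gaussianMomentCoeff μ 1 * b ^ (-((finrank ℝ E : ℝ) + 1) / 2) := by
  have hn : (0 : ℝ) < finrank ℝ E := Nat.cast_pos.2 finrank_pos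
  have hG := integrable_norm_rpow_mul_exp_neg_mul_sq μ hb (s := 0) (by linarith)
  have hM := integrable_norm_rpow_mul_exp_neg_mul_sq μ hb (s := 1) (by linarith)
  calc ∫ x, ‖x - v‖ ^ q * exp (-b * ‖x‖ ^ 2) ∂μ
      ≤ ∫ x, (1 + ‖v‖ ^ q) * (‖x‖ ^ (0 : ℝ) * exp (-b * ‖x‖ ^ 2)) +
          ‖x‖ ^ (1 : ℝ) * exp (-b * ‖x‖ ^ 2) ∂μ := by
        refine integral_mono_of_nonneg (ae_of_all _ fun x ↦ by positivity)
          ((hG.const_mul _).add hM) (ae_of_all _ fun x ↦ ?_)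
        simp only [rpow_zero, rpow_one, one_mul]
        nlinarith [norm_sub_rpow_le x v hq0.le hq1, exp_pos (-b * ‖x‖ ^ 2)]
    _ = _ := by
        rw [integral_add (hG.const_mul _) hM, integral_const_mul,
          integral_norm_rpow_mul_exp_neg_mul_sq μ hb (by linarith),
          integral_norm_rpow_mul_exp_neg_mul_sq μ hb (by linarith), add_zero]

lemma integral_norm_sub_rpow_mul_exp_neg_mul_sq_le_of_nonpos {b q : ℝ} (hb : 0 < b)
    (hq0 : q ≤ 0) (hqn : -(finrank ℝ E : ℝ) < q) (v : E) :
    ∫ x, ‖x - v‖ ^ q * exp (-b * ‖x‖ ^ 2) ∂μ ≤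
      gaussianMomentCoeff μ 0 * b ^ (-(finrank ℝ E : ℝ) / 2) +
        finrank ℝ E * μ.real (ball 0 1) / (finrank ℝ E + q) := by
  have hS := (integrable_indicator_norm_rpow μ hqn).comp_sub_right v
  have hG := integrable_norm_rpow_mul_exp_neg_mul_sq μ hb (s := 0) (by linarith)
  calc ∫ x, ‖x - v‖ ^ q * exp (-b * ‖x‖ ^ 2) ∂μ
      ≤ ∫ x, (Iio 1).indicator (fun r ↦ r ^ q) ‖x - v‖ +
          ‖x‖ ^ (0 : ℝ) * exp (-b * ‖x‖ ^ 2) ∂μ := by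
        refine integral_mono_of_nonneg (ae_of_all _ fun x ↦ by positivity) (hS.add hG)
          (ae_of_all _ fun x ↦ ?_)
        simp only [rpow_zero, one_mul]
        exact rpow_mul_le_indicator_add (norm_nonneg _) hq0 (exp_pos _).le
          (exp_le_one_iff.2 (by nlinarith [norm_nonneg x]))
    _ = _ := by
        rw [integral_add hS hG, integral_sub_right_eq_self (fun x ↦ (Iio 1).indicator _ ‖x‖),
          integral_indicator_norm_rpow μ hqn,
          integral_norm_rpow_mul_exp_neg_mul_sq μ hb (by linarith), add_zero, add_comm]

end HaarMeasure

/-- **Binary convolution estimate:** for `β > 0`, `q₂ ∈ (−d, 1]` and `v ∈ ℝ^d`,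
`∫_{ℝ^d} |v₁ − v|^{q₂} e^{−β|v₁|²} dv₁ ≤ C_d · K(β,q₂) · (1 + |v|^{q₂⁺})`. -/
theorem binary_convolution_estimate (d : ℕ) (hd : 2 ≤ d) :
    ∃ C : ℝ, 0 < C ∧
      ∀ (β q₂ : ℝ), 0 < β → -(d : ℝ) < q₂ → q₂ ≤ 1 →
        ∀ v : EuclideanSpace ℝ (Fin d),
          (∫ v₁ : EuclideanSpace ℝ (Fin d), ‖v₁ - v‖ ^ q₂ * Real.exp (-β * ‖v₁‖ ^ 2))
            ≤ C * (if 0 < q₂ then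
                    1 + β ^ (-(d : ℝ) / 2) + β ^ (-((d : ℝ) + 1) / 2)
                  else
                    β ^ (-(d : ℝ) / 2) + 1 / ((d : ℝ) + q₂)) *
                (1 + ‖v‖ ^ max 0 q₂) := by
  have hdim : finrank ℝ (EuclideanSpace ℝ (Fin d)) = d := finrank_euclideanSpace_fin
  have : Nontrivial (EuclideanSpace ℝ (Fin d)) :=
    Module.nontrivial_of_finrank_pos (R := ℝ) (by omega)
  set μ : Measure (EuclideanSpace ℝ (Fin d)) := volume
  set c₀ := gaussianMomentCoeff μ 0
  set c₁ := gaussianMomentCoeff μ 1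
  set cB := d * μ.real (ball 0 1)
  have hc₀ : 0 ≤ c₀ := gaussianMomentCoeff_nonneg μ (by simp)
  have hc₁ : 0 ≤ c₁ := gaussianMomentCoeff_nonneg μ (by simp; linarith)
  have hcB : 0 ≤ cB := by positivity
  refine ⟨c₀ + c₁ + cB + 1, by positivity, fun β q hβ hqn hq1 v ↦ ?_⟩
  have hA := rpow_nonneg hβ.le (-(d : ℝ) / 2)
  have hB := rpow_nonneg hβ.le (-((d : ℝ) + 1) / 2)
  split_ifs with hq
  · have h := integral_norm_sub_rpow_mul_exp_neg_mul_sq_le_of_pos μ hβ hq hq1 v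
    rw [hdim] at h
    rw [max_eq_right hq.le]
    have hw := rpow_nonneg (norm_nonneg v) q
    refine h.trans ?_
    nlinarith [mul_nonneg hA hw, mul_nonneg hB hw, mul_nonneg (mul_nonneg hc₀ hA) hw,
      mul_nonneg (mul_nonneg hc₁ hB) hw, mul_nonneg (mul_nonneg hcB hA) hw]
  · have hdq : 0 < 1 / ((d : ℝ) + q) := one_div_pos.2 (by linarith)
    have h := integral_norm_sub_rpow_mul_exp_neg_mul_sq_le_of_nonpos μ hβ (not_lt.1 hq)
      (by rwa [hdim]) v
    rw [hdim] at h
    rw [max_eq_left (not_lt.1 hq), rpow_zero]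
    refine h.trans ?_
    rw [div_eq_mul_one_div cB]
    nlinarith [mul_nonneg hc₀ hA, mul_nonneg hc₁ hA, mul_nonneg hcB hA, mul_nonneg hc₀ hdq.le,
      mul_nonneg hc₁ hdq.le, mul_nonneg hcB hdq.le]
end

section
/- Let d ≥ 2, α, β > 0, γ₂ ∈ (−d+1, 1], and let b₂ : [−1,1] → [0,∞) be measurable with ‖b₂‖_{L¹(S^{d−1})} := ∫_{S^{d−1}} b₂(ν·ω) dσ(ω) < ∞ (this value being independent of the unit vector ν). There exists a constant C_d > 0 depending only on d such that: if f, g : [0,∞) × ℝ^d × ℝ^d → ℝ are measurable and satisfy |f(τ,y,w)| ≤ Λ_f e^{−α|y−τw|² − β|w|²} and |g(τ,y,w)| ≤ Λ_g e^{−α|y−τw|² − β|w|²} for all τ ≥ 0 and all (y,w), then for every t > 0 and every (x,v) ∈ ℝ^d × ℝ^d, ∫₀^t ∫_{ℝ^d} ∫_{S^{d−1}} |u|^{γ₂} b₂(û·ω) |f(τ, x+τv, v)| |g(τ, x+τv, v₁)| dσ(ω) dv₁ dτ ≤ C_d ‖b₂‖_{L¹(S^{d−1})} α^{−1/2} (β^{−d/2}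 + 1/(d+γ₂−1)) Λ_f Λ_g e^{−α|x|² − β|v|²}, and the same bound holds with |f(τ, x+τv, v')| |g(τ, x+τv, v₁')| in place of |f(τ, x+τv, v)| |g(τ, x+τv, v₁)|. That is, the time integrals along free-transport characteristics of both the binary loss and the binary gain operators are bounded by a Maxwellian, uniformly in time. -/
/-!
Write `u = v₁ - v` and let `a` be a displacement with `a ⟂ u - a`: `a = 0` for the loss term and
`a = ⟪ω, u⟫ ω` for the gain term, so that `f` is evaluated at `v + a` and `g` at `v₁ - a`. Along
the characteristic through `(x, v)` the two Maxwellian bounds multiply to a Gaussian whose exponent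
is controlled by energy conservation, `|v + a|² + |v₁ - a|² = |v|² + |v₁|²`, and by
`|x - τ a|² + |x - τ (u - a)|² ≥ |x|² + (⟪x, û⟫ - τ |u|)²`. This leaves
`Λ_f Λ_g e^{-α|x|² - β|v|²}` times `b₂(û·ω) |u|^γ₂ e^{-β|v₁|²} e^{-α(⟪x, û⟫ - τ|u|)²}`.
The `ω`-integral produces `‖b₂‖`, the `τ`-integral of the last factor is at most `√(π/α) / |u|`,
and `∫ |u|^(γ₂-1) e^{-β|v₁|²} dv₁` is split at `|u| = 1`: polar coordinates on the unit ball give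
`d |B₁| / (d + γ₂ - 1)`, and outside it `|u|^(γ₂-1) ≤ 1` leaves a Gaussian integral.
-/

open MeasureTheory Metric
open scoped RealInnerProductSpace ENNReal

noncomputable section

/-- `ℝ^d` as a Euclidean space. -/
abbrev Euc (d : ℕ) := EuclideanSpace ℝ (Fin d)

open Real

section Geometry

variable {E : Type*} [NormedAddCommGroup E] [InnerProductSpace ℝ E]

lemma inner_inv_norm_smul_mul_norm (x u : E) : ⟪x, ‖u‖⁻¹ • u⟫ * ‖u‖ = ⟪x, u⟫ := by
  rcases eq_or_ne u 0 with rfl | hu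
  · simp
  · rw [real_inner_smul_right]
    field_simp [norm_ne_zero_iff.2 hu]

lemma sq_inner_inv_norm_smul_le (x u : E) : ⟪x, ‖u‖⁻¹ • u⟫ ^ 2 ≤ ‖x‖ ^ 2 := by
  have hu : ‖‖u‖⁻¹ • u‖ ≤ 1 := by
    rcases eq_or_ne u 0 with rfl | hu
    · simp
    · rw [norm_smul, norm_inv, norm_norm, inv_mul_cancel₀ (norm_ne_zero_iff.2 hu)]
  rw [← sq_abs]
  gcongr
  exact (abs_real_inner_le_norm x _).trans (mul_le_of_le_one_right (norm_nonneg x) hu)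

lemma norm_sq_add_sq_inner_sub_le {x u a : E} (τ : ℝ) (ha : ⟪a, u - a⟫ = 0) :
    ‖x‖ ^ 2 + (⟪x, ‖u‖⁻¹ • u⟫ - τ * ‖u‖) ^ 2 ≤ ‖x - τ • a‖ ^ 2 + ‖x - τ • (u - a)‖ ^ 2 := by
  have hpyth : ‖u‖ ^ 2 = ‖a‖ ^ 2 + ‖u - a‖ ^ 2 := by
    simpa [sq] using norm_add_sq_eq_norm_sq_add_norm_sq_real ha
  have hsplit : ⟪x, u⟫ = ⟪x, a⟫ + ⟪x, u - a⟫ := by rw [← inner_add_right, add_sub_cancel]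
  have hcs := sq_inner_inv_norm_smul_le x u
  have hmul := inner_inv_norm_smul_mul_norm x u
  have hexpand (w : E) : ‖x - τ • w‖ ^ 2 = ‖x‖ ^ 2 - 2 * τ * ⟪x, w⟫ + τ ^ 2 * ‖w‖ ^ 2 := by
    rw [norm_sub_sq_real, real_inner_smul_right, norm_smul, mul_pow, Real.norm_eq_abs, sq_abs]
    ring
  have hsq : (⟪x, ‖u‖⁻¹ • u⟫ - τ * ‖u‖) ^ 2
      = ⟪x, ‖u‖⁻¹ • u⟫ ^ 2 - 2 * τ * ⟪x, u⟫ + τ ^ 2 * (‖a‖ ^ 2 + ‖u - a‖ ^ 2) := by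
    rw [← hpyth, ← hmul]
    ring
  rw [hexpand, hexpand, hsq, hsplit]
  linarith

lemma norm_add_sq_add_norm_sub_sq_eq {v v₁ a : E} (ha : ⟪a, v₁ - v - a⟫ = 0) :
    ‖v + a‖ ^ 2 + ‖v₁ - a‖ ^ 2 = ‖v‖ ^ 2 + ‖v₁‖ ^ 2 := by
  rw [inner_sub_right, inner_sub_right, real_inner_self_eq_norm_sq] at ha
  rw [norm_add_sq_real, norm_sub_sq_real, real_inner_comm a v, real_inner_comm a v₁]
  linarith

lemma inner_smul_self_sub_smul_eq_zero {ω : E} (hω : ‖ω‖ = 1) (u : E) :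
    ⟪⟪ω, u⟫ • ω, u - ⟪ω, u⟫ • ω⟫ = 0 := by
  rw [inner_sub_right, real_inner_smul_left, real_inner_smul_left, real_inner_smul_right,
    real_inner_self_eq_norm_sq, hω]
  ring

end Geometry

section GaussianIntegrals

lemma lintegral_exp_neg_mul_sq_sub_mul {α r : ℝ} (hα : 0 < α) (hr : 0 < r) (c : ℝ) :
    ∫⁻ τ : ℝ, ENNReal.ofReal (exp (-α * (c - τ * r) ^ 2)) = ENNReal.ofReal (√(π / α) / r) := by
  have hint : Integrable fun τ : ℝ => exp (-α * (c - τ * r) ^ 2) :=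
    ((integrable_exp_neg_mul_sq hα).comp_sub_left c).comp_mul_right' hr.ne'
  rw [← ofReal_integral_eq_lintegral_ofReal hint (ae_of_all _ fun τ => (exp_pos _).le),
    Measure.integral_comp_mul_right (fun y => exp (-α * (c - y) ^ 2)),
    integral_sub_left_eq_self (fun y => exp (-α * y ^ 2)), integral_gaussian, smul_eq_mul,
    abs_of_pos (inv_pos.2 hr), inv_mul_eq_div]

variable {V : Type*} [NormedAddCommGroup V] [InnerProductSpace ℝ V] [FiniteDimensional ℝ V]
  [MeasurableSpace V] [BorelSpace V]

lemma lintegral_exp_neg_mul_sq_norm {β : ℝ} (hβ : 0 < β) :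
    ∫⁻ w : V, ENNReal.ofReal (exp (-β * ‖w‖ ^ 2))
      = ENNReal.ofReal ((π / β) ^ (Module.finrank ℝ V / 2 : ℝ)) := by
  have hval := GaussianFourier.integral_rexp_neg_mul_sq_norm (V := V) hβ
  have hint : Integrable fun w : V => exp (-β * ‖w‖ ^ 2) :=
    .of_integral_ne_zero (by rw [hval]; positivity)
  rw [← ofReal_integral_eq_lintegral_ofReal hint (ae_of_all _ fun w => (exp_pos _).le), hval]

end GaussianIntegrals

section Radial

variable {E : Type*} [NormedAddCommGroup E] [NormedSpace ℝ E] [Nontrivial E] [FiniteDimensional ℝ E]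
  [MeasurableSpace E] [BorelSpace E] (μ : Measure E) [μ.IsAddHaarMeasure]

open Module in
lemma lintegral_ball_rpow_norm {s : ℝ} (hs : -(finrank ℝ E : ℝ) < s) :
    ∫⁻ z in ball (0 : E) 1, ENNReal.ofReal (‖z‖ ^ s) ∂μ
      = ENNReal.ofReal (finrank ℝ E * μ.real (ball 0 1) / (finrank ℝ E + s)) := by
  set n := finrank ℝ E
  have hn : 1 ≤ n := Module.finrank_pos
  have hexp : -1 < (n - 1 : ℕ) + s := by push_cast [Nat.cast_sub hn]; linarith
  have hpow : ∀ y ∈ Set.Ioo (0 : ℝ) 1, y ^ (n - 1) • y ^ s = y ^ ((n - 1 : ℕ) + s) :=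
    fun y hy => by rw [smul_eq_mul, ← rpow_natCast, ← rpow_add hy.1]
  have hint : IntegrableOn (fun z : E => ‖z‖ ^ s) (ball 0 1) μ := by
    refine (integrableOn_fun_norm_addHaar μ (f := fun y => y ^ s)).2 ?_
    rw [integrableOn_congr_fun hpow measurableSet_Ioo]
    exact (intervalIntegral.intervalIntegrable_rpow' hexp).1.mono_set Set.Ioo_subset_Ioc_self
  rw [← ofReal_integral_eq_lintegral_ofReal hint (ae_of_all _ fun z => by positivity)]
  congr 1
  calc ∫ z in ball (0 : E) 1, ‖z‖ ^ s ∂μ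
      = ∫ z, (Set.Iio 1).indicator (fun y : ℝ => y ^ s) ‖z‖ ∂μ := by
        rw [← integral_indicator measurableSet_ball]
        congr 1 with z
        simp [Set.indicator]
    _ = n * μ.real (ball 0 1) * ∫ y in Set.Ioo (0 : ℝ) 1, y ^ ((n - 1 : ℕ) + s) := by
        rw [integral_fun_norm_addHaar, nsmul_eq_mul, smul_eq_mul, mul_assoc,
          ← Set.indicator_smul (Set.Iio 1) (fun y : ℝ => y ^ (n - 1)) (fun y => y ^ s),
          setIntegral_indicator measurableSet_Iio, Set.Ioi_inter_Iio,
          setIntegral_congr_fun measurableSet_Ioo hpow]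
    _ = n * μ.real (ball 0 1) / (n + s) := by
        rw [← integral_Ioc_eq_integral_Ioo, ← intervalIntegral.integral_of_le zero_le_one,
          integral_rpow (Or.inl hexp)]
        push_cast [Nat.cast_sub hn]
        rw [show (n : ℝ) - 1 + s + 1 = n + s by ring, one_rpow, zero_rpow (by linarith)]
        ring

end Radial

section SingularGaussian

variable {V : Type*} [NormedAddCommGroup V] [InnerProductSpace ℝ V] [FiniteDimensional ℝ V]
  [Nontrivial V] [MeasurableSpace V] [BorelSpace V]

open Module in
lemma lintegral_rpow_norm_sub_mul_exp_le {s β : ℝ} (hβ : 0 < β) (hs : -(finrank ℝ V : ℝ) < s)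
    (hs₀ : s ≤ 0) (v : V) :
    ∫⁻ w : V, ENNReal.ofReal (‖w - v‖ ^ s * exp (-β * ‖w‖ ^ 2))
      ≤ ENNReal.ofReal (finrank ℝ V * volume.real (ball (0 : V) 1) / (finrank ℝ V + s))
        + ENNReal.ofReal ((π / β) ^ (finrank ℝ V / 2 : ℝ)) := by
  have hpoint (w : V) : ENNReal.ofReal (‖w - v‖ ^ s * exp (-β * ‖w‖ ^ 2))
      ≤ (ball (0 : V) 1).indicator (fun z => ENNReal.ofReal (‖z‖ ^ s)) (w - v)
        + ENNReal.ofReal (exp (-β * ‖w‖ ^ 2)) := by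
    by_cases hw : ‖w - v‖ < 1
    · rw [Set.indicator_of_mem (mem_ball_zero_iff.2 hw)]
      refine le_add_right (ENNReal.ofReal_le_ofReal (mul_le_of_le_one_right (by positivity) ?_))
      exact exp_le_one_iff.2 (by nlinarith [sq_nonneg ‖w‖])
    · rw [Set.indicator_of_notMem (fun h => hw (mem_ball_zero_iff.1 h)), zero_add]
      refine ENNReal.ofReal_le_ofReal (mul_le_of_le_one_left (exp_pos _).le ?_)
      exact rpow_le_one_of_one_le_of_nonpos (not_lt.1 hw) hs₀
  refine (lintegral_mono hpoint).trans_eq ?_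
  rw [lintegral_add_right _ (by fun_prop), lintegral_sub_right_eq_self _ v,
    lintegral_indicator measurableSet_ball, lintegral_ball_rpow_norm _ hs,
    lintegral_exp_neg_mul_sq_norm hβ]

end SingularGaussian

lemma nonneg_of_abs_le_mul_exp {a Λ r : ℝ} (h : |a| ≤ Λ * exp r) : 0 ≤ Λ :=
  nonneg_of_mul_nonneg_left ((abs_nonneg a).trans h) (exp_pos r)

section Characteristics

variable {E : Type*} [NormedAddCommGroup E] [InnerProductSpace ℝ E]

def residualGaussian (α β : ℝ) (x v : E) (τ : ℝ) (v₁ : E) : ℝ :=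
  exp (-β * ‖v₁‖ ^ 2 - α * (⟪x, ‖v₁ - v‖⁻¹ • (v₁ - v)⟫ - τ * ‖v₁ - v‖) ^ 2)

lemma residualGaussian_pos (α β : ℝ) (x v : E) (τ : ℝ) (v₁ : E) :
    0 < residualGaussian α β x v τ v₁ :=
  exp_pos _

lemma abs_mul_abs_le_maxwellian_mul_residualGaussian {f g : E → E → ℝ} {α β τ Λf Λg : ℝ}
    (hα : 0 ≤ α) (hf : ∀ y w, |f y w| ≤ Λf * exp (-α * ‖y - τ • w‖ ^ 2 - β * ‖w‖ ^ 2))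
    (hg : ∀ y w, |g y w| ≤ Λg * exp (-α * ‖y - τ • w‖ ^ 2 - β * ‖w‖ ^ 2))
    {x v v₁ a : E} (ha : ⟪a, v₁ - v - a⟫ = 0) :
    |f (x + τ • v) (v + a)| * |g (x + τ • v) (v₁ - a)|
      ≤ Λf * Λg * exp (-α * ‖x‖ ^ 2 - β * ‖v‖ ^ 2) * residualGaussian α β x v τ v₁ := by
  have hxf : x + τ • v - τ • (v + a) = x - τ • a := by module
  have hxg : x + τ • v - τ • (v₁ - a) = x - τ • (v₁ - v - a) := by module
  have hfa := hf (x + τ • v) (v + a)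
  have hgb := hg (x + τ • v) (v₁ - a)
  rw [hxf] at hfa
  rw [hxg] at hgb
  have hgeom := norm_sq_add_sq_inner_sub_le (x := x) τ ha
  have henergy := norm_add_sq_add_norm_sub_sq_eq ha
  calc |f (x + τ • v) (v + a)| * |g (x + τ • v) (v₁ - a)|
      ≤ (Λf * exp (-α * ‖x - τ • a‖ ^ 2 - β * ‖v + a‖ ^ 2)) *
          (Λg * exp (-α * ‖x - τ • (v₁ - v - a)‖ ^ 2 - β * ‖v₁ - a‖ ^ 2)) :=
        mul_le_mul hfa hgb (abs_nonneg _) ((abs_nonneg _).trans hfa)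
    _ = Λf * Λg * exp (-α * (‖x - τ • a‖ ^ 2 + ‖x - τ • (v₁ - v - a)‖ ^ 2)
          - β * (‖v + a‖ ^ 2 + ‖v₁ - a‖ ^ 2)) := by
        rw [mul_mul_mul_comm, ← exp_add]
        ring_nf
    _ ≤ Λf * Λg * exp (-α * (‖x‖ ^ 2 + (⟪x, ‖v₁ - v‖⁻¹ • (v₁ - v)⟫ - τ * ‖v₁ - v‖) ^ 2)
          - β * (‖v‖ ^ 2 + ‖v₁‖ ^ 2)) := by
        refine mul_le_mul_of_nonneg_left (exp_le_exp.2 ?_)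
          (mul_nonneg (nonneg_of_abs_le_mul_exp hfa) (nonneg_of_abs_le_mul_exp hgb))
        rw [henergy]
        nlinarith [mul_le_mul_of_nonneg_left hgeom hα]
    _ = Λf * Λg * exp (-α * ‖x‖ ^ 2 - β * ‖v‖ ^ 2) * residualGaussian α β x v τ v₁ := by
        rw [residualGaussian, mul_assoc (Λf * Λg), ← exp_add]
        ring_nf

lemma setLIntegral_rpow_mul_residualGaussian_le {α β γ : ℝ} (hα : 0 < α) (s : Set ℝ)
    {x v v₁ : E} (hv₁ : v₁ ≠ v) :
    ∫⁻ τ in s, ENNReal.ofReal (‖v₁ - v‖ ^ γ * residualGaussian α β x v τ v₁)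
      ≤ ENNReal.ofReal √(π / α) * ENNReal.ofReal (‖v₁ - v‖ ^ (γ - 1) * exp (-β * ‖v₁‖ ^ 2)) := by
  have hr : 0 < ‖v₁ - v‖ := norm_pos_iff.2 (sub_ne_zero.2 hv₁)
  have hsplit (τ : ℝ) : ‖v₁ - v‖ ^ γ * residualGaussian α β x v τ v₁
      = ‖v₁ - v‖ ^ γ * exp (-β * ‖v₁‖ ^ 2) *
        exp (-α * (⟪x, ‖v₁ - v‖⁻¹ • (v₁ - v)⟫ - τ * ‖v₁ - v‖) ^ 2) := by
    rw [residualGaussian, mul_assoc, ← exp_add]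
    ring_nf
  simp_rw [hsplit, ENNReal.ofReal_mul (by positivity : 0 ≤ ‖v₁ - v‖ ^ γ * exp (-β * ‖v₁‖ ^ 2))]
  rw [lintegral_const_mul' _ _ ENNReal.ofReal_ne_top]
  calc _ ≤ ENNReal.ofReal (‖v₁ - v‖ ^ γ * exp (-β * ‖v₁‖ ^ 2)) * ∫⁻ τ : ℝ,
        ENNReal.ofReal (exp (-α * (⟪x, ‖v₁ - v‖⁻¹ • (v₁ - v)⟫ - τ * ‖v₁ - v‖) ^ 2)) := by
        gcongr
        exact Measure.restrict_le_self
    _ = _ := by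
        rw [lintegral_exp_neg_mul_sq_sub_mul hα hr, ← ENNReal.ofReal_mul (by positivity),
          ← ENNReal.ofReal_mul (by positivity), rpow_sub_one hr.ne']
        congr 1
        field_simp

end Characteristics

section TimeAverage

variable {V : Type*} [NormedAddCommGroup V] [InnerProductSpace ℝ V] [FiniteDimensional ℝ V]
  [MeasurableSpace V] [BorelSpace V]

open Module in
lemma setLIntegral_lintegral_rpow_mul_residualGaussian_le [Nontrivial V] {α β γ : ℝ}
    (hα : 0 < α) (hβ : 0 < β) (hγ : -(finrank ℝ V : ℝ) + 1 < γ) (hγ₁ : γ ≤ 1) (s : Set ℝ)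
    (x v : V) :
    ∫⁻ τ in s, ∫⁻ v₁ : V, ENNReal.ofReal (‖v₁ - v‖ ^ γ * residualGaussian α β x v τ v₁)
      ≤ ENNReal.ofReal (√(π / α) * ((π / β) ^ (finrank ℝ V / 2 : ℝ)
          + finrank ℝ V * volume.real (ball (0 : V) 1) / (finrank ℝ V + γ - 1))) := by
  have hmeas : Measurable fun p : ℝ × V =>
      ENNReal.ofReal (‖p.2 - v‖ ^ γ * residualGaussian α β x v p.1 p.2) := by
    unfold residualGaussian
    fun_prop
  rw [lintegral_lintegral_swap hmeas.aemeasurable]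
  calc _ ≤ ∫⁻ v₁ : V, ENNReal.ofReal √(π / α) *
        ENNReal.ofReal (‖v₁ - v‖ ^ (γ - 1) * exp (-β * ‖v₁‖ ^ 2)) :=
        lintegral_mono_ae ((volume.ae_ne v).mono fun v₁ hv₁ =>
          setLIntegral_rpow_mul_residualGaussian_le hα s hv₁)
    _ ≤ ENNReal.ofReal √(π / α) *
        (ENNReal.ofReal (finrank ℝ V * volume.real (ball (0 : V) 1) / (finrank ℝ V + (γ - 1)))
          + ENNReal.ofReal ((π / β) ^ (finrank ℝ V / 2 : ℝ))) := by
        rw [lintegral_const_mul' _ _ ENNReal.ofReal_ne_top]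
        gcongr
        exact lintegral_rpow_norm_sub_mul_exp_le hβ (by linarith) (by linarith) v
    _ = _ := by
        rw [← ENNReal.ofReal_add (div_nonneg (by positivity) (by linarith)) (by positivity),
          ← ENNReal.ofReal_mul (by positivity), add_comm, add_sub_assoc]

end TimeAverage

section Collision

variable {E : Type*} [NormedAddCommGroup E] [InnerProductSpace ℝ E] [MeasurableSpace E]
  {μ : Measure E} [NullSingletonClass μ] {σ : Measure (sphere (0 : E) 1)}

lemma setLIntegral_collision_le {b₂ : ℝ → ℝ} {B α β γ Λf Λg t : ℝ} {f g : ℝ → E → E → ℝ}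
    (hα : 0 ≤ α) (hb₂ : ∀ ν : E, ‖ν‖ = 1 → ∫⁻ ω, ENNReal.ofReal (b₂ ⟪ν, ω⟫) ∂σ = ENNReal.ofReal B)
    (hf : ∀ τ, 0 ≤ τ → ∀ y w, |f τ y w| ≤ Λf * exp (-α * ‖y - τ • w‖ ^ 2 - β * ‖w‖ ^ 2))
    (hg : ∀ τ, 0 ≤ τ → ∀ y w, |g τ y w| ≤ Λg * exp (-α * ‖y - τ • w‖ ^ 2 - β * ‖w‖ ^ 2))
    (x v : E) (a : E → sphere (0 : E) 1 → E)
    (ha : ∀ v₁ ω, ⟪a v₁ ω, v₁ - v - a v₁ ω⟫ = 0) :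
    ∫⁻ τ in Set.Ioc 0 t, ∫⁻ v₁, ∫⁻ ω,
        ENNReal.ofReal (‖v₁ - v‖ ^ γ) * ENNReal.ofReal (b₂ ⟪‖v₁ - v‖⁻¹ • (v₁ - v), ω⟫) *
          ENNReal.ofReal |f τ (x + τ • v) (v + a v₁ ω)| *
          ENNReal.ofReal |g τ (x + τ • v) (v₁ - a v₁ ω)| ∂σ ∂μ
      ≤ ENNReal.ofReal B * ENNReal.ofReal (Λf * Λg * exp (-α * ‖x‖ ^ 2 - β * ‖v‖ ^ 2)) *
          ∫⁻ τ in Set.Ioc 0 t, ∫⁻ v₁,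
            ENNReal.ofReal (‖v₁ - v‖ ^ γ * residualGaussian α β x v τ v₁) ∂μ := by
  set M := Λf * Λg * exp (-α * ‖x‖ ^ 2 - β * ‖v‖ ^ 2)
  have hfin : ENNReal.ofReal B * ENNReal.ofReal M ≠ ⊤ := by finiteness
  rw [← lintegral_const_mul' _ _ hfin]
  refine setLIntegral_mono' measurableSet_Ioc fun τ hτ => ?_
  rw [← lintegral_const_mul' _ _ hfin]
  refine lintegral_mono_ae ((μ.ae_ne v).mono fun v₁ hv₁ => ?_)
  have hν : ‖‖v₁ - v‖⁻¹ • (v₁ - v)‖ = 1 := by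
    rw [norm_smul, norm_inv, norm_norm, inv_mul_cancel₀ (norm_ne_zero_iff.2 (sub_ne_zero.2 hv₁))]
  have hpoint (ω : sphere (0 : E) 1) :
      ENNReal.ofReal (‖v₁ - v‖ ^ γ) * ENNReal.ofReal (b₂ ⟪‖v₁ - v‖⁻¹ • (v₁ - v), ω⟫) *
          ENNReal.ofReal |f τ (x + τ • v) (v + a v₁ ω)| *
          ENNReal.ofReal |g τ (x + τ • v) (v₁ - a v₁ ω)|
        ≤ ENNReal.ofReal (b₂ ⟪‖v₁ - v‖⁻¹ • (v₁ - v), ω⟫) *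
          ENNReal.ofReal (M * (‖v₁ - v‖ ^ γ * residualGaussian α β x v τ v₁)) := by
    have hγ : 0 ≤ ‖v₁ - v‖ ^ γ := by positivity
    have hfg := abs_mul_abs_le_maxwellian_mul_residualGaussian hα (hf τ hτ.1.le) (hg τ hτ.1.le)
      (x := x) (ha v₁ ω)
    rw [mul_comm (ENNReal.ofReal _) (ENNReal.ofReal (b₂ _)), mul_assoc _ (ENNReal.ofReal _),
      mul_assoc, ← ENNReal.ofReal_mul (abs_nonneg _), ← ENNReal.ofReal_mul hγ]
    gcongr _ * ENNReal.ofReal ?_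
    calc ‖v₁ - v‖ ^ γ * (|f τ (x + τ • v) (v + a v₁ ω)| * |g τ (x + τ • v) (v₁ - a v₁ ω)|)
        ≤ ‖v₁ - v‖ ^ γ * (M * residualGaussian α β x v τ v₁) :=
          mul_le_mul_of_nonneg_left hfg hγ
      _ = M * (‖v₁ - v‖ ^ γ * residualGaussian α β x v τ v₁) := by ring
  calc _ ≤ ∫⁻ ω, ENNReal.ofReal (b₂ ⟪‖v₁ - v‖⁻¹ • (v₁ - v), ω⟫) *
          ENNReal.ofReal (M * (‖v₁ - v‖ ^ γ * residualGaussian α β x v τ v₁)) ∂σ :=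
        lintegral_mono hpoint
    _ = ENNReal.ofReal B * ENNReal.ofReal M *
          ENNReal.ofReal (‖v₁ - v‖ ^ γ * residualGaussian α β x v τ v₁) := by
        rw [lintegral_mul_const' _ _ ENNReal.ofReal_ne_top, hb₂ _ hν, mul_assoc (ENNReal.ofReal B),
          ← ENNReal.ofReal_mul' (mul_nonneg (by positivity) (residualGaussian_pos ..).le)]

end Collision

lemma sqrt_pi_div_mul_add_le {α β n A D : ℝ} (hα : 0 < α) (hβ : 0 < β) (hA : 0 ≤ A) (hD : 0 < D) :
    √(π / α) * ((π / β) ^ (n / 2) + A / D)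
      ≤ √π * (π ^ (n / 2) + A) * α ^ (-(1 : ℝ) / 2) * (β ^ (-n / 2) + 1 / D) := by
  have hsqrt : √(π / α) = √π * α ^ (-(1 : ℝ) / 2) := by
    rw [sqrt_div pi_pos.le, sqrt_eq_rpow α, neg_div, rpow_neg hα.le, div_eq_mul_inv]
  have hpow : (π / β) ^ (n / 2) = π ^ (n / 2) * β ^ (-n / 2) := by
    rw [div_rpow pi_pos.le hβ.le, neg_div, rpow_neg hβ.le, div_eq_mul_inv]
  have hcross : 0 ≤ π ^ (n / 2) * (1 / D) + A * β ^ (-n / 2) := by positivity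
  have hfactor : 0 ≤ √π * α ^ (-(1 : ℝ) / 2) := by positivity
  have hgap : √π * (π ^ (n / 2) + A) * α ^ (-(1 : ℝ) / 2) * (β ^ (-n / 2) + 1 / D)
      - √(π / α) * ((π / β) ^ (n / 2) + A / D)
      = √π * α ^ (-(1 : ℝ) / 2) * (π ^ (n / 2) * (1 / D) + A * β ^ (-n / 2)) := by
    rw [hsqrt, hpow]
    ring
  linarith [mul_nonneg hfactor hcross]

/-- **Global Maxwellian bound on the time average along free-transport characteristics
of the binary loss and gain operators:** there is `C_d > 0` depending only on `d` such
that, whenever the transported functions `f^#, g^#` are bounded by Maxwellians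
`Λ e^{−α|x|²−β|v|²}`, then for every `t > 0` and every `(x,v)`,
`∫₀^t L₂^#(f,g)(τ,x,v) dτ` and `∫₀^t G₂^#(f,g)(τ,x,v) dτ` are bounded by
`C_d ‖b₂‖ α^{−1/2} (β^{−d/2} + 1/(d+γ₂−1)) Λ_f Λ_g e^{−α|x|²−β|v|²}`. -/
theorem binary_time_average_maxwellian_bound (d : ℕ) (hd : 2 ≤ d) :
    ∃ C : ℝ, 0 < C ∧
      ∀ (α β γ₂ : ℝ) (b₂ : ℝ → ℝ) (B2n : ℝ)
        (f g : ℝ → Euc d → Euc d → ℝ) (Λf Λg : ℝ),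
        0 < α → 0 < β → -(d : ℝ) + 1 < γ₂ → γ₂ ≤ 1 →
        Measurable b₂ → (∀ z : ℝ, 0 ≤ b₂ z) →
        (∀ ν : Euc d, ‖ν‖ = 1 →
          (∫⁻ ω : sphere (0 : Euc d) 1,
              ENNReal.ofReal (b₂ ⟪ν, (ω : Euc d)⟫) ∂volume.toSphere)
            = ENNReal.ofReal B2n) →
        Measurable (fun q : ℝ × Euc d × Euc d => f q.1 q.2.1 q.2.2) →
        Measurable (fun q : ℝ × Euc d × Euc d => g q.1 q.2.1 q.2.2) →
        (∀ τ : ℝ, 0 ≤ τ → ∀ y w : Euc d,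
          |f τ y w| ≤ Λf * Real.exp (-α * ‖y - τ • w‖ ^ 2 - β * ‖w‖ ^ 2)) →
        (∀ τ : ℝ, 0 ≤ τ → ∀ y w : Euc d,
          |g τ y w| ≤ Λg * Real.exp (-α * ‖y - τ • w‖ ^ 2 - β * ‖w‖ ^ 2)) →
        ∀ t : ℝ, 0 < t → ∀ x v : Euc d,
          (∫⁻ τ in Set.Ioc (0 : ℝ) t, ∫⁻ v₁ : Euc d, ∫⁻ ω : sphere (0 : Euc d) 1,
              ENNReal.ofReal (‖v₁ - v‖ ^ γ₂) *
                ENNReal.ofReal (b₂ ⟪‖v₁ - v‖⁻¹ • (v₁ - v), (ω : Euc d)⟫) *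
                ENNReal.ofReal |f τ (x + τ • v) v| *
                ENNReal.ofReal |g τ (x + τ • v) v₁| ∂volume.toSphere)
            ≤ ENNReal.ofReal (C * B2n * α ^ (-(1 : ℝ) / 2) *
                (β ^ (-(d : ℝ) / 2) + 1 / ((d : ℝ) + γ₂ - 1)) * Λf * Λg *
                Real.exp (-α * ‖x‖ ^ 2 - β * ‖v‖ ^ 2)) ∧
          (∫⁻ τ in Set.Ioc (0 : ℝ) t, ∫⁻ v₁ : Euc d, ∫⁻ ω : sphere (0 : Euc d) 1,
              ENNReal.ofReal (‖v₁ - v‖ ^ γ₂) *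
                ENNReal.ofReal (b₂ ⟪‖v₁ - v‖⁻¹ • (v₁ - v), (ω : Euc d)⟫) *
                ENNReal.ofReal |f τ (x + τ • v) (v + ⟪(ω : Euc d), v₁ - v⟫ • (ω : Euc d))| *
                ENNReal.ofReal
                  |g τ (x + τ • v) (v₁ - ⟪(ω : Euc d), v₁ - v⟫ • (ω : Euc d))|
              ∂volume.toSphere)
            ≤ ENNReal.ofReal (C * B2n * α ^ (-(1 : ℝ) / 2) *
                (β ^ (-(d : ℝ) / 2) + 1 / ((d : ℝ) + γ₂ - 1)) * Λf * Λg *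
                Real.exp (-α * ‖x‖ ^ 2 - β * ‖v‖ ^ 2)) := by
  have : NeZero d := ⟨by omega⟩
  have hdim : Module.finrank ℝ (Euc d) = d := finrank_euclideanSpace_fin
  refine ⟨√π * (π ^ ((d : ℝ) / 2) + d * volume.real (ball (0 : Euc d) 1)), by positivity, ?_⟩
  intro α β γ₂ b₂ B2n f g Λf Λg hα hβ hγ hγ₁ _ _ hb₂ _ _ hf hg t _ x v
  have hD : 0 < (d : ℝ) + γ₂ - 1 := by linarith
  have hΛf : 0 ≤ Λf := nonneg_of_abs_le_mul_exp (hf 0 le_rfl 0 0)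
  have hΛg : 0 ≤ Λg := nonneg_of_abs_le_mul_exp (hg 0 le_rfl 0 0)
  have htime := setLIntegral_lintegral_rpow_mul_residualGaussian_le hα hβ (by rwa [hdim]) hγ₁
    (Set.Ioc 0 t) x v
  rw [hdim] at htime
  have hconst := sqrt_pi_div_mul_add_le (n := d) hα hβ
    (by positivity : 0 ≤ (d : ℝ) * volume.real (ball (0 : Euc d) 1)) hD
  have hfinal : ENNReal.ofReal B2n * ENNReal.ofReal (Λf * Λg * exp (-α * ‖x‖ ^ 2 - β * ‖v‖ ^ 2)) *
      ∫⁻ τ in Set.Ioc 0 t, ∫⁻ v₁ : Euc d,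
        ENNReal.ofReal (‖v₁ - v‖ ^ γ₂ * residualGaussian α β x v τ v₁)
      ≤ ENNReal.ofReal (√π * (π ^ ((d : ℝ) / 2) + d * volume.real (ball (0 : Euc d) 1)) * B2n *
          α ^ (-(1 : ℝ) / 2) * (β ^ (-(d : ℝ) / 2) + 1 / ((d : ℝ) + γ₂ - 1)) * Λf * Λg *
          exp (-α * ‖x‖ ^ 2 - β * ‖v‖ ^ 2)) := by
    grw [htime, mul_assoc, ← ENNReal.ofReal_mul' (by positivity), hconst,
      ← ENNReal.ofReal_mul' (by positivity)]
    exact (congrArg ENNReal.ofReal (by ring)).le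
  constructor
  · simpa only [add_zero, sub_zero] using (setLIntegral_collision_le hα.le hb₂ hf hg x v
      (fun _ _ => 0) fun _ _ => inner_zero_left _).trans hfinal
  · exact (setLIntegral_collision_le hα.le hb₂ hf hg x v (fun v₁ ω => ⟪(ω : Euc d), v₁ - v⟫ • ω)
      fun v₁ ω => inner_smul_self_sub_smul_eq_zero (mem_sphere_zero_iff_norm.1 ω.2) _).trans hfinal
end
end
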